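/- If P_{ã1} and P_{ã2} are two different projections both mapping C1 onto C2 (onto the same plane Π), with associated rational functions ψ1 and ψ2 respectively, then ψ1 ≠ ψ2; that is, distinct projections mapping C1 onto C2 have distinct associated rational functions. -/

import Mathlib

noncomputable section

open Polynomial Filter Matrix

/-- Evaluation of a real rational function at a real point (junk value at poles). -/
def RFeval (f : RatFunc ℝ) (t : ℝ) : ℝ := f.num.eval t / f.denom.eval t

/-- Evaluation of a real rational function at a complex point (junk value at poles). -/
def RFevalC (f : RatFunc ℝ) (t : ℂ) : ℂ :=
  ((f.num.map (algebraMap ℝ ℂ)).eval t) / ((f.denom.map (algebraMap ℝ ℂ)).eval t)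

/-- The derivative of a rational function. -/
def RFderiv (f : RatFunc ℝ) : RatFunc ℝ :=
  (algebraMap (Polynomial ℝ) (RatFunc ℝ) (derivative f.num) *
      algebraMap (Polynomial ℝ) (RatFunc ℝ) f.denom -
    algebraMap (Polynomial ℝ) (RatFunc ℝ) f.num *
      algebraMap (Polynomial ℝ) (RatFunc ℝ) (derivative f.denom)) /
  algebraMap (Polynomial ℝ) (RatFunc ℝ) (f.denom ^ 2)

/-- The real domain of definition of a rational space parametrization. -/
def DomR (x : Fin 3 → RatFunc ℝ) (t : ℝ) : Prop := ∀ i, (x i).denom.eval t ≠ 0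

/-- The complex domain of definition of a rational space parametrization. -/
def DomC (x : Fin 3 → RatFunc ℝ) (t : ℂ) : Prop :=
  ∀ i, ((x i).denom.map (algebraMap ℝ ℂ)).eval t ≠ 0

/-- The affine point of the curve corresponding to the (real) parameter value `t`. -/
def evalAff (x : Fin 3 → RatFunc ℝ) (t : ℝ) : Fin 3 → ℝ := fun i => RFeval (x i) t

/-- The affine point of the curve corresponding to the (complex) parameter value `t`. -/
def evalAffC (x : Fin 3 → RatFunc ℝ) (t : ℂ) : Fin 3 → ℂ := fun i => RFevalC (x i) t

/-- Properness of a parametrization: it is injective for all but finitely many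
(complex) parameter values. -/
def ProperParam (x : Fin 3 → RatFunc ℝ) : Prop :=
  {t : ℂ | DomC x t ∧ ∃ t', t' ≠ t ∧ DomC x t' ∧ evalAffC x t' = evalAffC x t}.Finite

/-- The curve is a straight line. -/
def IsLineParam (x : Fin 3 → RatFunc ℝ) : Prop :=
  ∃ p v : Fin 3 → ℝ, v ≠ 0 ∧ ∀ t : ℝ, DomR x t → ∃ μ : ℝ, evalAff x t = p + μ • v

/-- The curve lies in the plane with coefficient vector `n = (A,B,C,D)`,
of equation `Ax + By + Cz + D = 0`. -/
def InPlane (x : Fin 3 → RatFunc ℝ) (n : Fin 4 → ℝ) : Prop :=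
  ∀ t : ℝ, DomR x t → (∑ i : Fin 3, n i.castSucc * RFeval (x i) t) + n 3 = 0

/-- The normal vector of the plane `Ax + By + Cz + D = 0` is nonzero. -/
def PlaneNormalNZ (n : Fin 4 → ℝ) : Prop := ¬ (n 0 = 0 ∧ n 1 = 0 ∧ n 2 = 0)

/-- Complexification of a real vector. -/
def cmap4 (v : Fin 4 → ℝ) : Fin 4 → ℂ := fun i => (v i : ℂ)

/-- Homogeneous form of the projection onto the plane `n` from the eye point `a`:
`p ↦ ⟨n,p⟩ a − ⟨n,a⟩ p`. -/
def projHC (n a p : Fin 4 → ℂ) : Fin 4 → ℂ :=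
  (∑ i, n i * p i) • a - (∑ i, n i * a i) • p

/-- Complex homogeneous coordinates of the affine point `x(t)`. -/
def homC (x : Fin 3 → RatFunc ℝ) (t : ℂ) : Fin 4 → ℂ :=
  Fin.snoc (evalAffC x t) 1

/-- The affine form of the projection, acting on affine (complex) points. -/
def projAffC (n a : Fin 4 → ℝ) (p : Fin 3 → ℂ) : Fin 3 → ℂ :=
  fun i => projHC (cmap4 n) (cmap4 a) (Fin.snoc p 1) i.castSucc /
    projHC (cmap4 n) (cmap4 a) (Fin.snoc p 1) 3

/-- The parameter values `t`, `s` are related by the projection from the eye point `a`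
onto the plane `n`: the projection maps `x1(t)` to `x2(s)`. -/
def RelatedByProj (n a : Fin 4 → ℝ) (x1 x2 : Fin 3 → RatFunc ℝ) (t s : ℂ) : Prop :=
  DomC x1 t ∧ DomC x2 s ∧
    ∃ lam : ℂ, lam ≠ 0 ∧ projHC (cmap4 n) (cmap4 a) (homC x1 t) = lam • homC x2 s

/-- `C2` (parametrized by `x2`) is the projection of `C1` (parametrized by `x1`)
from the eye point `a` onto the plane `n`: every point of `C2` (up to finitely many)
is the projection of some point of `C1`.  The eye point is a nonzero vector of `ℝ⁴`
(projective coordinates) not lying on the plane. -/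
def IsProjectionOf (n a : Fin 4 → ℝ) (x1 x2 : Fin 3 → RatFunc ℝ) : Prop :=
  a ≠ 0 ∧ (∑ i, n i * a i) ≠ 0 ∧
    ∀ᶠ s : ℂ in cofinite, ∃ t : ℂ, RelatedByProj n a x1 x2 t s

/-- The projection, restricted to `C1`, is injective for almost all points of `C2`. -/
def NonDegenerateProj (n a : Fin 4 → ℝ) (x1 x2 : Fin 3 → RatFunc ℝ) : Prop :=
  ∀ᶠ s : ℂ in cofinite, ∃! t : ℂ, RelatedByProj n a x1 x2 t s

/-- `ψ` is associated with the projection:  `P_ã ∘ x1 = x2 ∘ ψ`. -/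
def AssociatedRF (n a : Fin 4 → ℝ) (x1 x2 : Fin 3 → RatFunc ℝ) (ψ : RatFunc ℝ) : Prop :=
  ∀ᶠ t : ℂ in cofinite, RelatedByProj n a x1 x2 t (RFevalC ψ t)

/-- `N(t,s)·(x1(t) − x2(s)) = det(x1(t) − x2(s), x1'(t), x2'(s))`,
where `N(t,s) = x1'(t) × x2'(s)`, evaluated at the complex pair `(t,s)`. -/
def NdotC (x1 x2 : Fin 3 → RatFunc ℝ) (t s : ℂ) : ℂ :=
  dotProduct
    (crossProduct (fun i => RFevalC (RFderiv (x1 i)) t) (fun i => RFevalC (RFderiv (x2 i)) s))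
    (fun i => RFevalC (x1 i) t - RFevalC (x2 i) s)

/-- Evaluation of a bivariate real polynomial at a complex point `(t,s)`. -/
def aeval2 (t s : ℂ) (F : MvPolynomial (Fin 2) ℝ) : ℂ := MvPolynomial.aeval ![t, s] F

/-- `Ncal` is (a representative of) the square-free part of the numerator of the
bivariate rational function `N(t,s)·(x1(t) − x2(s))`: it is square-free and has the
same zero set. -/
def IsNcal (x1 x2 : Fin 3 → RatFunc ℝ) (Ncal : MvPolynomial (Fin 2) ℝ) : Prop :=
  Squarefree Ncal ∧
    ∀ t s : ℂ, DomC x1 t → DomC x2 s → (aeval2 t s Ncal = 0 ↔ NdotC x1 x2 t s = 0)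

/-- The polynomial `G(t,s) = p(t) − s·q(t)` associated with `ψ = p/q`;
variable `0` is `t` and variable `1` is `s`. -/
def assocPoly (ψ : RatFunc ℝ) : MvPolynomial (Fin 2) ℝ :=
  Polynomial.aeval (MvPolynomial.X 0) ψ.num -
    MvPolynomial.X 1 * Polynomial.aeval (MvPolynomial.X 0) ψ.denom

/-- `(t,s)` is a singular point of the plane curve `𝒩* : Ncal = 0`. -/
def SingPt (Ncal : MvPolynomial (Fin 2) ℝ) (t s : ℂ) : Prop :=
  aeval2 t s Ncal = 0 ∧ aeval2 t s (MvPolynomial.pderiv 0 Ncal) = 0 ∧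
    aeval2 t s (MvPolynomial.pderiv 1 Ncal) = 0

/-- `p` is the limit point `P^∞ = lim_{t→∞} x(t)` of the parametrization `x`. -/
def IsLimitPoint (x : Fin 3 → RatFunc ℝ) (p : Fin 3 → ℂ) : Prop :=
  Filter.Tendsto (evalAffC x) (Filter.cocompact ℂ) (nhds p)

/-- `q` is a self-intersection of the curve parametrized by `x`. -/
def SelfIntersection (x : Fin 3 → RatFunc ℝ) (q : Fin 3 → ℂ) : Prop :=
  ∃ s1 s2 : ℂ, s1 ≠ s2 ∧ DomC x s1 ∧ DomC x s2 ∧ evalAffC x s1 = q ∧ evalAffC x s2 = q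

/-- The pair `(x1(t0), x2(s0))` is lucky. -/
def LuckyPair (x1 x2 : Fin 3 → RatFunc ℝ) (Ncal : MvPolynomial (Fin 2) ℝ)
    (t0 s0 : ℂ) : Prop :=
  evalAffC x1 t0 ≠ evalAffC x2 s0 ∧
  ¬ IsLimitPoint x1 (evalAffC x1 t0) ∧
  ¬ IsLimitPoint x2 (evalAffC x2 s0) ∧
  ¬ SelfIntersection x2 (evalAffC x2 s0) ∧
  ¬ ∃ s' : ℂ, SingPt Ncal t0 s'

/-!
Suppose `ψ` is associated with both projections. Eliminating the common image `x2(ψ(t))` from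
the two projection equations shows that `x1(t)` lies on `Π` or on a plane `m` through both eye
points, because the eyes are not proportional. One of the two happens for infinitely many `t`,
so, after clearing denominators, `C1` lies entirely on that plane. For `Π` this contradicts the
non-coplanarity of `C1` and `C2`; for `m` as well, since a projection from an eye on `m` keeps
`m` invariant, so `C2 = P(C1)` lies on `m` too.
-/

def InPlaneC (x : Fin 3 → RatFunc ℝ) (c : Fin 4 → ℝ) : Prop :=
  ∀ t : ℂ, DomC x t → cmap4 c ⬝ᵥ homC x t = 0

/-- The numerator of the plane equation of `c` along `x`, all denominators cleared. -/
def planePoly (c : Fin 4 → ℝ) (x : Fin 3 → RatFunc ℝ) : ℝ[X] :=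
  C (c 0) * (x 0).num * (x 1).denom * (x 2).denom +
    C (c 1) * (x 0).denom * (x 1).num * (x 2).denom +
    C (c 2) * (x 0).denom * (x 1).denom * (x 2).num +
    C (c 3) * (x 0).denom * (x 1).denom * (x 2).denom

section PlaneEquation

variable {x : Fin 3 → RatFunc ℝ}

lemma dotProduct_homC (c : Fin 4 → ℂ) (t : ℂ) :
    c ⬝ᵥ homC x t = ∑ i : Fin 3, c i.castSucc * RFevalC (x i) t + c 3 := by
  simp only [dotProduct, Fin.sum_univ_castSucc, homC, evalAffC, Fin.snoc_castSucc, Fin.snoc_last,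
    mul_one]
  rfl

lemma cmap4_dotProduct_cmap4 (m a : Fin 4 → ℝ) :
    cmap4 m ⬝ᵥ cmap4 a = ((m ⬝ᵥ a : ℝ) : ℂ) := by
  simp [dotProduct, cmap4]

lemma eval_map_ofReal (p : ℝ[X]) (t : ℝ) :
    (p.map (algebraMap ℝ ℂ)).eval (t : ℂ) = p.eval t := by
  rw [Polynomial.eval_map]
  exact Polynomial.eval₂_at_apply _ _

lemma RFevalC_ofReal (f : RatFunc ℝ) (t : ℝ) : RFevalC f t = RFeval f t := by
  simp only [RFevalC, RFeval, eval_map_ofReal, Complex.ofReal_div]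

lemma eval_map_planePoly (c : Fin 4 → ℝ) {t : ℂ} (ht : DomC x t) :
    ((planePoly c x).map (algebraMap ℝ ℂ)).eval t =
      (∏ i, ((x i).denom.map (algebraMap ℝ ℂ)).eval t) * (cmap4 c ⬝ᵥ homC x t) := by
  have h0 := ht 0
  have h1 := ht 1
  have h2 := ht 2
  simp only [planePoly, dotProduct_homC, RFevalC, Fin.prod_univ_three, Fin.sum_univ_three,
    Polynomial.map_add, Polynomial.map_mul, Polynomial.map_C, Polynomial.eval_add,
    Polynomial.eval_mul, Polynomial.eval_C, cmap4, Complex.coe_algebraMap, Fin.castSucc_zero,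
    Fin.castSucc_one, show (Fin.castSucc 2 : Fin 4) = 2 from rfl]
  field_simp

lemma inPlaneC_of_infinite {c : Fin 4 → ℝ}
    (h : {t : ℂ | DomC x t ∧ cmap4 c ⬝ᵥ homC x t = 0}.Infinite) : InPlaneC x c := by
  have hpoly : (planePoly c x).map (algebraMap ℝ ℂ) = 0 := by
    refine Polynomial.eq_zero_of_infinite_isRoot _ (h.mono fun t ht => ?_)
    exact (eval_map_planePoly c ht.1).trans (by rw [ht.2, mul_zero])
  intro t ht
  have hprod : ∏ i, ((x i).denom.map (algebraMap ℝ ℂ)).eval t ≠ 0 :=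
    Finset.prod_ne_zero_iff.mpr fun i _ => ht i
  refine (mul_eq_zero.mp ?_).resolve_left hprod
  rw [← eval_map_planePoly c ht, hpoly, Polynomial.eval_zero]

lemma InPlaneC.inPlane {c : Fin 4 → ℝ} (h : InPlaneC x c) : InPlane x c := by
  intro t ht
  have htC : DomC x t := fun i => by
    show ((x i).denom.map (algebraMap ℝ ℂ)).eval (t : ℂ) ≠ 0
    rw [eval_map_ofReal]
    exact_mod_cast ht i
  have := h t htC
  simp only [dotProduct_homC, cmap4, RFevalC_ofReal] at this
  exact_mod_cast this

end PlaneEquation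

lemma dotProduct_projHC (m n a p : Fin 4 → ℂ) :
    m ⬝ᵥ projHC n a p = (n ⬝ᵥ p) * (m ⬝ᵥ a) - (n ⬝ᵥ a) * (m ⬝ᵥ p) := by
  simp only [projHC, dotProduct, Pi.sub_apply, Pi.smul_apply, smul_eq_mul, mul_sub,
    Finset.sum_sub_distrib, Finset.mul_sum]
  congr 1 <;> exact Finset.sum_congr rfl fun i _ => by ring

lemma dotProduct_eq_zero_or_of_projHC_eq_smul {n a1 a2 m p q : Fin 4 → ℂ} {l1 l2 : ℂ}
    (h1 : projHC n a1 p = l1 • q) (h2 : projHC n a2 p = l2 • q)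
    (hm1 : m ⬝ᵥ a1 = 0) (hm2 : m ⬝ᵥ a2 = 0) :
    n ⬝ᵥ p = 0 ∨ l2 • a1 = l1 • a2 ∨ m ⬝ᵥ p = 0 := by
  have key : (n ⬝ᵥ p) • (l2 • a1 - l1 • a2) =
      (l2 * (n ⬝ᵥ a1) - l1 * (n ⬝ᵥ a2)) • p := by
    funext i
    have e1 := congrFun h1 i
    have e2 := congrFun h2 i
    simp only [projHC, dotProduct, Pi.sub_apply, Pi.smul_apply, smul_eq_mul] at e1 e2 ⊢
    linear_combination l2 * e1 - l1 * e2
  by_cases hβ : l2 * (n ⬝ᵥ a1) - l1 * (n ⬝ᵥ a2) = 0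
  · rw [hβ, zero_smul, smul_eq_zero, sub_eq_zero] at key
    tauto
  · right; right
    have hm := congrArg (m ⬝ᵥ ·) key
    simp only [dotProduct_smul, dotProduct_sub, hm1, hm2, smul_eq_mul, mul_zero, sub_zero,
      zero_eq_mul] at hm
    exact hm.resolve_left hβ

lemma exists_real_smul_eq {ι : Type*} {a1 a2 : ι → ℝ} {l1 l2 : ℂ}
    (hl1 : l1 ≠ 0) (hl2 : l2 ≠ 0)
    (h : l2 • (fun i => (a1 i : ℂ)) = l1 • fun i => (a2 i : ℂ)) :
    ∃ c : ℝ, c ≠ 0 ∧ a2 = c • a1 := by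
  have hi (i : ι) : l2 * a1 i = l1 * a2 i := congrFun h i
  by_cases ha1 : a1 = 0
  · refine ⟨1, one_ne_zero, funext fun i => ?_⟩
    have := hi i
    simp_all
  obtain ⟨i0, hi0⟩ := Function.ne_iff.mp ha1
  have ha2i0 : a2 i0 ≠ 0 := by
    intro h0
    have := hi i0
    rw [h0, Complex.ofReal_zero, mul_zero, mul_eq_zero] at this
    exact this.elim hl2 (by exact_mod_cast hi0)
  refine ⟨a2 i0 / a1 i0, div_ne_zero ha2i0 hi0, funext fun i => ?_⟩
  have hcross : l1 * (a2 i * a1 i0 : ℝ) = l1 * (a2 i0 * a1 i : ℝ) := by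
    push_cast
    linear_combination (a1 i0 : ℂ) * (hi i).symm + (a1 i : ℂ) * hi i0
  have := mul_left_cancel₀ hl1 hcross
  rw [Pi.smul_apply, smul_eq_mul, div_mul_eq_mul_div, eq_div_iff hi0]
  exact_mod_cast this

lemma exists_planeNormalNZ_orthogonal (a1 a2 : Fin 4 → ℝ) :
    ∃ m : Fin 4 → ℝ, PlaneNormalNZ m ∧ m ⬝ᵥ a1 = 0 ∧ m ⬝ᵥ a2 = 0 := by
  set M : Matrix (Fin 2) (Fin 3) ℝ := Matrix.of ![fun j => a1 j.castSucc, fun j => a2 j.castSucc]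
  obtain ⟨g, hg, hg0⟩ := Submodule.ne_bot_iff _ |>.mp <|
    LinearMap.ker_ne_bot_of_finrank_lt (f := M.mulVecLin) (by simp)
  have hMg : M *ᵥ g = 0 := hg
  refine ⟨Fin.snoc g 0, fun ⟨h0, h1, h2⟩ => hg0 ?_, ?_, ?_⟩
  · funext j
    fin_cases j
    exacts [h0, h1, h2]
  all_goals
    rw [dotProduct, Fin.sum_univ_castSucc]
    simp only [Fin.snoc_castSucc, Fin.snoc_last, zero_mul, add_zero]
  · simpa [M, Matrix.mulVec, dotProduct, mul_comm] using congrFun hMg 0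
  · simpa [M, Matrix.mulVec, dotProduct, mul_comm] using congrFun hMg 1

section RelatedByProj

variable {n a a1 a2 m : Fin 4 → ℝ} {x1 x2 : Fin 3 → RatFunc ℝ} {t s : ℂ}

lemma RelatedByProj.dotProduct_homC_eq_zero_or (h1 : RelatedByProj n a1 x1 x2 t s)
    (h2 : RelatedByProj n a2 x1 x2 t s) (hdiff : ¬ ∃ c : ℝ, c ≠ 0 ∧ a2 = c • a1)
    (hm1 : m ⬝ᵥ a1 = 0) (hm2 : m ⬝ᵥ a2 = 0) :
    cmap4 n ⬝ᵥ homC x1 t = 0 ∨ cmap4 m ⬝ᵥ homC x1 t = 0 := by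
  obtain ⟨-, -, l1, hl1, he1⟩ := h1
  obtain ⟨-, -, l2, hl2, he2⟩ := h2
  have hm1C : cmap4 m ⬝ᵥ cmap4 a1 = 0 := by
    rw [cmap4_dotProduct_cmap4, hm1, Complex.ofReal_zero]
  have hm2C : cmap4 m ⬝ᵥ cmap4 a2 = 0 := by
    rw [cmap4_dotProduct_cmap4, hm2, Complex.ofReal_zero]
  rcases dotProduct_eq_zero_or_of_projHC_eq_smul he1 he2 hm1C hm2C with hn | heyes | hm
  · exact Or.inl hn
  · exact absurd (exists_real_smul_eq hl1 hl2 heyes) hdiff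
  · exact Or.inr hm

lemma RelatedByProj.dotProduct_homC_eq_zero (h : RelatedByProj n a x1 x2 t s)
    (hma : m ⬝ᵥ a = 0) (hp : cmap4 m ⬝ᵥ homC x1 t = 0) : cmap4 m ⬝ᵥ homC x2 s = 0 := by
  obtain ⟨-, -, l, hl, he⟩ := h
  have := dotProduct_projHC (cmap4 m) (cmap4 n) (cmap4 a) (homC x1 t)
  rw [he, dotProduct_smul, cmap4_dotProduct_cmap4, hma, hp] at this
  simpa [hl] using this

lemma InPlaneC.of_isProjectionOf (h : IsProjectionOf n a x1 x2) (hma : m ⬝ᵥ a = 0)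
    (h1 : InPlaneC x1 m) : InPlaneC x2 m := by
  refine inPlaneC_of_infinite (frequently_cofinite_iff_infinite.mp (h.2.2.mono ?_).frequently)
  rintro s ⟨t, hrel⟩
  exact ⟨hrel.2.1, hrel.dotProduct_homC_eq_zero hma (h1 t hrel.1)⟩

end RelatedByProj

theorem statement_10_general (x1 x2 : Fin 3 → RatFunc ℝ) (n a1 a2 : Fin 4 → ℝ)
    (ψ1 ψ2 : RatFunc ℝ)
    (hn : PlaneNormalNZ n) (hplane : InPlane x2 n)
    (hsame : ¬ ∃ m : Fin 4 → ℝ, PlaneNormalNZ m ∧ InPlane x1 m ∧ InPlane x2 m)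
    (hproj1 : IsProjectionOf n a1 x1 x2)
    (hdiff : ¬ ∃ c : ℝ, c ≠ 0 ∧ a2 = c • a1)
    (hψ1 : AssociatedRF n a1 x1 x2 ψ1) (hψ2 : AssociatedRF n a2 x1 x2 ψ2) :
    ψ1 ≠ ψ2 := by
  rintro rfl
  obtain ⟨m, hm, hm1, hm2⟩ := exists_planeNormalNZ_orthogonal a1 a2
  have hcover : ∀ᶠ t : ℂ in cofinite, (DomC x1 t ∧ cmap4 n ⬝ᵥ homC x1 t = 0) ∨
      (DomC x1 t ∧ cmap4 m ⬝ᵥ homC x1 t = 0) := by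
    filter_upwards [hψ1, hψ2] with t h1 h2
    rcases h1.dotProduct_homC_eq_zero_or h2 hdiff hm1 hm2 with h | h
    exacts [Or.inl ⟨h1.1, h⟩, Or.inr ⟨h1.1, h⟩]
  have hinf := frequently_cofinite_iff_infinite.mp hcover.frequently
  rw [Set.ofPred_or, Set.infinite_union] at hinf
  rcases hinf with hnC | hmC
  · exact hsame ⟨n, hn, (inPlaneC_of_infinite hnC).inPlane, hplane⟩
  · have h1 := inPlaneC_of_infinite hmC
    exact hsame ⟨m, hm, h1.inPlane, (h1.of_isProjectionOf hproj1 hm1).inPlane⟩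

/-- If `P_{ã1}` and `P_{ã2}` are two different projections both
mapping `C1` onto `C2` (onto the same plane `Π`), with associated rational functions
`ψ1` and `ψ2` respectively, then `ψ1 ≠ ψ2`: distinct projections mapping `C1` onto
`C2` have distinct associated rational functions. -/
theorem statement_10 (x1 x2 : Fin 3 → RatFunc ℝ) (n a1 a2 : Fin 4 → ℝ)
    (ψ1 ψ2 : RatFunc ℝ)
    (hx1 : ProperParam x1) (hx2 : ProperParam x2)
    (hnl1 : ¬ IsLineParam x1) (hnl2 : ¬ IsLineParam x2)
    (hn : PlaneNormalNZ n) (hplane : InPlane x2 n)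
    (hsame : ¬ ∃ m : Fin 4 → ℝ, PlaneNormalNZ m ∧ InPlane x1 m ∧ InPlane x2 m)
    (hproj1 : IsProjectionOf n a1 x1 x2) (hproj2 : IsProjectionOf n a2 x1 x2)
    (hdiff : ¬ ∃ c : ℝ, c ≠ 0 ∧ a2 = c • a1)
    (hψ1 : AssociatedRF n a1 x1 x2 ψ1) (hψ2 : AssociatedRF n a2 x1 x2 ψ2) :
    ψ1 ≠ ψ2 :=
  statement_10_general x1 x2 n a1 a2 ψ1 ψ2 hn hplane hsame hproj1 hdiff hψ1 hψ2

end
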